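/- For all t ∈ [t₀, T*) one has |y(t)|^α = αa(T* − t) + g(t), where g(t) = −α ∫_t^{T*} |y(τ)|^{α−2} (f(τ)·y(τ)) dτ, and there exists a constant C > 0 such that |g(t)| ≤ C(T* − t)^{1 + δ/α} for all t ∈ [t₀, T*). In particular, | |y(t)|^α − αa(T* − t) | ≤ C(T* − t)^{1 + δ/α} for all t ∈ [t₀, T*). -/

import Mathlib

/-!
Along the flow, `d/dt ‖y‖^α = -αa + α ‖y‖^(α-2) ⟪f, y⟫`, and `‖y‖^α → 0` at `T'`, so the
fundamental theorem of calculus gives the identity with `g(t) = -α ∫_t^T' ‖y‖^(α-2) ⟪f, y⟫`.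
The integrand is bounded by `M ‖y‖^δ`. Since `y` is bounded, this first gives
`|g(t)| ≲ T' - t`, hence `‖y(τ)‖^α ≲ T' - τ`; fed back into the integrand it yields
`‖y(τ)‖^δ ≲ (T' - t)^(δ/α)` on `[t, T')` and so `|g(t)| ≲ (T' - t)^(1 + δ/α)`.
-/

open Set Real Filter Topology MeasureTheory

noncomputable section

/-- The action of an `n × n` real matrix on `EuclideanSpace ℝ (Fin n)` by
matrix-vector multiplication. -/
def mulVecE {n : ℕ} (A : Matrix (Fin n) (Fin n) ℝ) (x : EuclideanSpace ℝ (Fin n)) :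
    EuclideanSpace ℝ (Fin n) :=
  WithLp.toLp 2 (A.mulVec x)

open scoped RealInnerProductSpace

section IcoBounds

variable {E : Type*} [NormedAddCommGroup E] {g : ℝ → E} {a b C : ℝ}

theorem exists_norm_le_of_continuousOn_Ico_of_tendsto {L : E} (hg : ContinuousOn g (Ico a b))
    (hlim : Tendsto g (𝓝[<] b) (𝓝 L)) : ∃ B, ∀ t ∈ Ico a b, ‖g t‖ ≤ B := by
  classical
  have hcont : ContinuousOn (Function.update g b L) (Icc a b) := by
    rw [continuousOn_update_iff, Icc_sdiff_right]
    exact ⟨hg, fun _ => hlim.mono_left (nhdsWithin_mono _ Ico_subset_Iio_self)⟩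
  obtain ⟨B, hB⟩ := isCompact_Icc.exists_bound_of_continuousOn hcont
  refine ⟨B, fun t ht => ?_⟩
  simpa [Function.update_of_ne ht.2.ne] using hB t (Ico_subset_Icc_self ht)

theorem intervalIntegrable_of_continuousOn_Ico_of_norm_le (hab : a ≤ b)
    (hg : ContinuousOn g (Ico a b)) (hC : ∀ t ∈ Ico a b, ‖g t‖ ≤ C) :
    IntervalIntegrable g volume a b := by
  rw [intervalIntegrable_iff_integrableOn_Ioo_of_le hab]
  exact Integrable.mono' (integrableOn_const measure_Ioo_lt_top.ne)
    ((hg.mono Ioo_subset_Ico_self).aestronglyMeasurable measurableSet_Ioo)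
    (ae_restrict_of_forall_mem measurableSet_Ioo fun t ht => hC t (Ioo_subset_Ico_self ht))

variable [NormedSpace ℝ E]

theorem norm_intervalIntegral_le_of_norm_le_const_Ico (hab : a ≤ b)
    (hC : ∀ t ∈ Ico a b, ‖g t‖ ≤ C) : ‖∫ t in a..b, g t‖ ≤ C * (b - a) := by
  rw [← abs_of_nonneg (sub_nonneg.2 hab)]
  refine intervalIntegral.norm_integral_le_of_norm_le_const_ae ?_
  filter_upwards [(countable_singleton b).ae_notMem volume] with t htb ht
  rw [uIoc_of_le hab] at ht
  exact hC t ⟨ht.1.le, ht.2.lt_of_ne htb⟩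

end IcoBounds

theorem eq_neg_intervalIntegral_of_hasDerivAt_of_tendsto_zero {φ φ' : ℝ → ℝ} {t₀ T t : ℝ}
    (hcont : ContinuousOn φ (Ico t₀ T)) (hlim : Tendsto φ (𝓝[<] T) (𝓝 0))
    (hderiv : ∀ s ∈ Ioo t₀ T, HasDerivAt φ (φ' s) s) (ht : t ∈ Ico t₀ T)
    (hint : IntervalIntegrable φ' volume t T) : φ t = -∫ s in t..T, φ' s := by
  have hright : Tendsto φ (𝓝[>] t) (𝓝 (φ t)) :=
    (hcont t ht).mono_of_mem_nhdsWithin (mem_of_superset (Ioo_mem_nhdsGT ht.2)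
      fun s hs => ⟨ht.1.trans hs.1.le, hs.2⟩)
  rw [intervalIntegral.integral_eq_sub_of_hasDerivAt_of_tendsto ht.2
    (fun s hs => hderiv s ⟨ht.1.trans_lt hs.1, hs.2⟩) hint hright hlim]
  ring

theorem rpow_le_rpow_div_of_rpow_le {x c α δ : ℝ} (hx : 0 ≤ x) (hα : 0 < α) (hδ : 0 ≤ δ)
    (h : x ^ α ≤ c) : x ^ δ ≤ c ^ (δ / α) := by
  calc x ^ δ = (x ^ α) ^ (δ / α) := by rw [← rpow_mul hx, mul_div_cancel₀ _ hα.ne']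
    _ ≤ c ^ (δ / α) := rpow_le_rpow (rpow_nonneg hx _) h (div_nonneg hδ hα.le)

section InnerProductSpace

variable {E : Type*} [NormedAddCommGroup E] [InnerProductSpace ℝ E]

theorem HasDerivAt.norm_rpow {y : ℝ → E} {y' : E} {t p : ℝ} (hy : HasDerivAt y y' t)
    (h0 : y t ≠ 0) :
    HasDerivAt (fun s => ‖y s‖ ^ p) (p * ‖y t‖ ^ (p - 2) * ⟪y t, y'⟫) t := by
  have hsq : ∀ s, ‖y s‖ ^ p = (‖y s‖ ^ 2) ^ (p / 2) := fun s => by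
    rw [← rpow_natCast, ← rpow_mul (norm_nonneg _)]; ring_nf
  simp_rw [hsq]
  convert hy.norm_sq.rpow_const (p := p / 2) (Or.inl (by positivity)) using 1
  rw [← rpow_natCast, ← rpow_mul (norm_nonneg _)]
  ring_nf

theorem hasDerivAt_norm_rpow_of_hasDerivAt_neg_smul_add {y : ℝ → E} {v : E} {a α t : ℝ}
    (h0 : y t ≠ 0) (hy : HasDerivAt y (-(a * ‖y t‖ ^ (-α)) • y t + v) t) :
    HasDerivAt (fun s => ‖y s‖ ^ α) (-(α * a) + α * (‖y t‖ ^ (α - 2) * inner ℝ v (y t))) t := by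
  have hr : 0 < ‖y t‖ := norm_pos_iff.2 h0
  have hcancel : ‖y t‖ ^ (α - 2) * ‖y t‖ ^ (-α) * ‖y t‖ ^ 2 = 1 := by
    rw [← rpow_add hr, ← rpow_natCast, ← rpow_add hr, Nat.cast_ofNat,
      show α - 2 + -α + 2 = 0 by ring, rpow_zero]
  convert HasDerivAt.norm_rpow (p := α) hy h0 using 1
  rw [inner_add_right, inner_smul_right, real_inner_self_eq_norm_sq, real_inner_comm]
  linear_combination α * a * hcancel

theorem abs_rpow_mul_inner_le {x v : E} {M p q : ℝ} (hx : x ≠ 0) (hv : ‖v‖ ≤ M * ‖x‖ ^ q) :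
    |‖x‖ ^ p * inner ℝ v x| ≤ M * ‖x‖ ^ (p + q + 1) := by
  have hr : 0 < ‖x‖ := norm_pos_iff.2 hx
  calc |‖x‖ ^ p * inner ℝ v x| ≤ ‖x‖ ^ p * (‖v‖ * ‖x‖) := by
        rw [abs_mul, abs_of_pos (rpow_pos_of_pos hr p)]
        gcongr
        exact abs_real_inner_le_norm v x
    _ ≤ ‖x‖ ^ p * (M * ‖x‖ ^ q * ‖x‖) := by gcongr
    _ = M * ‖x‖ ^ (p + q + 1) := by
        rw [rpow_add hr, rpow_add hr, rpow_one]; ring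

theorem norm_rpow_eq_mul_sub_add_integral {y f : ℝ → E} {α a t₀ T : ℝ} (hα : 0 < α)
    (hycont : ContinuousOn y (Ico t₀ T)) (hyne : ∀ t ∈ Ico t₀ T, y t ≠ 0)
    (hylim : Tendsto y (𝓝[<] T) (𝓝 0))
    (hode : ∀ t ∈ Ioo t₀ T, HasDerivAt y ((-(a * ‖y t‖ ^ (-α))) • y t + f t) t)
    (hint : ∀ t ∈ Ico t₀ T,
      IntervalIntegrable (fun τ => ‖y τ‖ ^ (α - 2) * ⟪f τ, y τ⟫) volume t T) :
    ∀ t ∈ Ico t₀ T, ‖y t‖ ^ α =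
      α * a * (T - t) + -α * ∫ τ in t..T, ‖y τ‖ ^ (α - 2) * ⟪f τ, y τ⟫ := by
  intro t ht
  have hint' := (hint t ht).const_mul α
  rw [eq_neg_intervalIntegral_of_hasDerivAt_of_tendsto_zero
      (φ' := fun s => -(α * a) + α * (‖y s‖ ^ (α - 2) * ⟪f s, y s⟫))
      (hycont.norm.rpow_const fun τ hτ => Or.inl (norm_ne_zero_iff.2 (hyne τ hτ)))
      _ _ ht (intervalIntegrable_const.add hint'),
    intervalIntegral.integral_add intervalIntegrable_const hint',
    intervalIntegral.integral_const, intervalIntegral.integral_const_mul, smul_eq_mul]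
  · ring
  · simpa [zero_rpow hα.ne'] using hylim.norm.rpow_const (p := α) (Or.inr hα.le)
  · exact fun s hs => hasDerivAt_norm_rpow_of_hasDerivAt_neg_smul_add
      (hyne s (Ioo_subset_Ico_self hs)) (hode s hs)

end InnerProductSpace

theorem abs_intervalIntegral_le_of_rpow_le {u h : ℝ → ℝ} {t T K M α δ : ℝ} (htT : t ≤ T)
    (hα : 0 < α) (hδ : 0 ≤ δ) (hK : 0 ≤ K) (hM : 0 ≤ M)
    (hu : ∀ τ ∈ Ico t T, 0 ≤ u τ ∧ u τ ^ α ≤ K * (T - τ))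
    (hh : ∀ τ ∈ Ico t T, |h τ| ≤ M * u τ ^ δ) :
    |∫ τ in t..T, h τ| ≤ M * K ^ (δ / α) * (T - t) ^ (1 + δ / α) := by
  have hpt : ∀ τ ∈ Ico t T, ‖h τ‖ ≤ M * K ^ (δ / α) * (T - t) ^ (δ / α) := fun τ hτ => by
    have hu' : u τ ^ α ≤ K * (T - t) := (hu τ hτ).2.trans (by gcongr; exact hτ.1)
    calc ‖h τ‖ ≤ M * u τ ^ δ := hh τ hτ
      _ ≤ M * (K * (T - t)) ^ (δ / α) := by
          gcongr; exact rpow_le_rpow_div_of_rpow_le (hu τ hτ).1 hα hδ hu'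
      _ = M * K ^ (δ / α) * (T - t) ^ (δ / α) := by
          rw [mul_rpow hK (sub_nonneg.2 htT)]; ring
  calc |∫ τ in t..T, h τ| ≤ M * K ^ (δ / α) * (T - t) ^ (δ / α) * (T - t) :=
        norm_intervalIntegral_le_of_norm_le_const_Ico htT hpt
    _ = M * K ^ (δ / α) * (T - t) ^ (1 + δ / α) := by
        rw [rpow_add' (sub_nonneg.2 htT) (by positivity), rpow_one]; ring

theorem abs_neg_mul_intervalIntegral_le_of_rpow_eq {u h : ℝ → ℝ} {α δ M c B t₀ T : ℝ}
    (hα : 0 < α) (hδ : 0 ≤ δ) (hM : 0 ≤ M) (hc : 0 ≤ c)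
    (hu : ∀ τ ∈ Ico t₀ T, 0 ≤ u τ ∧ u τ ≤ B) (hh : ∀ τ ∈ Ico t₀ T, |h τ| ≤ M * u τ ^ δ)
    (hid : ∀ t ∈ Ico t₀ T, u t ^ α = c * (T - t) + -α * ∫ τ in t..T, h τ) :
    ∀ t ∈ Ico t₀ T, |-α * ∫ τ in t..T, h τ| ≤
      α * M * (c + α * (M * B ^ δ)) ^ (δ / α) * (T - t) ^ (1 + δ / α) := by
  have hhB : ∀ τ ∈ Ico t₀ T, ‖h τ‖ ≤ M * B ^ δ := fun τ hτ =>
    (hh τ hτ).trans (by gcongr; exacts [(hu τ hτ).1, (hu τ hτ).2])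
  have hcrude : ∀ t ∈ Ico t₀ T, u t ^ α ≤ (c + α * (M * B ^ δ)) * (T - t) := fun t ht => by
    have hint := norm_intervalIntegral_le_of_norm_le_const_Ico ht.2.le
      fun τ hτ => hhB τ (Ico_subset_Ico_left ht.1 hτ)
    rw [hid t ht]
    nlinarith [neg_abs_le (∫ τ in t..T, h τ), (Real.norm_eq_abs _).symm.trans_le hint]
  intro t ht
  have hsub : Ico t T ⊆ Ico t₀ T := Ico_subset_Ico_left ht.1
  have hB0 : 0 ≤ B := (hu t ht).1.trans (hu t ht).2
  rw [abs_mul, abs_neg, abs_of_pos hα, mul_assoc α, mul_assoc α]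
  gcongr
  exact abs_intervalIntegral_le_of_rpow_le ht.2.le hα hδ (by positivity) hM
    (fun τ hτ => ⟨(hu τ (hsub hτ)).1, hcrude τ (hsub hτ)⟩) fun τ hτ => hh τ (hsub hτ)

theorem norm_power_identity_special_case_general (n : ℕ)
    (α δ M a t₀ T' : ℝ) (hα : 0 < α) (hδ : 0 < δ) (hM : 0 < M) (ha : 0 < a)
    (hT' : t₀ < T')
    (y f : ℝ → EuclideanSpace ℝ (Fin n))
    (hycont : ContinuousOn y (Ico t₀ T'))
    (hyne : ∀ t ∈ Ico t₀ T', y t ≠ 0)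
    (hylim : Tendsto y (𝓝[<] T') (𝓝 0))
    (hode : ∀ t ∈ Ioo t₀ T', HasDerivAt y ((-(a * ‖y t‖ ^ (-α))) • y t + f t) t)
    (hfcont : ContinuousOn f (Ico t₀ T'))
    (hfb : ∀ t ∈ Ico t₀ T', ‖f t‖ ≤ M * ‖y t‖ ^ (1 - α + δ))
    :
    ∃ C : ℝ, 0 < C ∧
      ∀ t ∈ Ico t₀ T',
        ‖y t‖ ^ α = α * a * (T' - t) +
            (-α * ∫ τ in t..T', ‖y τ‖ ^ (α - 2) * (inner ℝ (f τ) (y τ) : ℝ)) ∧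
        |(-α * ∫ τ in t..T', ‖y τ‖ ^ (α - 2) * (inner ℝ (f τ) (y τ) : ℝ))| ≤
            C * (T' - t) ^ (1 + δ / α) ∧
        |‖y t‖ ^ α - α * a * (T' - t)| ≤ C * (T' - t) ^ (1 + δ / α) := by
  set h : ℝ → ℝ := fun τ => ‖y τ‖ ^ (α - 2) * ⟪f τ, y τ⟫
  obtain ⟨B, hB⟩ := exists_norm_le_of_continuousOn_Ico_of_tendsto hycont hylim
  have hB0 : 0 ≤ B := (norm_nonneg _).trans (hB t₀ ⟨le_rfl, hT'⟩)
  have hhy : ∀ τ ∈ Ico t₀ T', |h τ| ≤ M * ‖y τ‖ ^ δ := fun τ hτ => by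
    have := abs_rpow_mul_inner_le (p := α - 2) (hyne τ hτ) (hfb τ hτ)
    rwa [show α - 2 + (1 - α + δ) + 1 = δ by ring] at this
  have hhcont : ContinuousOn h (Ico t₀ T') :=
    (hycont.norm.rpow_const fun τ hτ => Or.inl (norm_ne_zero_iff.2 (hyne τ hτ))).mul
      (hfcont.inner hycont)
  have hhB : ∀ τ ∈ Ico t₀ T', ‖h τ‖ ≤ M * B ^ δ := fun τ hτ =>
    (hhy τ hτ).trans (by gcongr; exact hB τ hτ)
  have hint : ∀ t ∈ Ico t₀ T', IntervalIntegrable h volume t T' := fun t ht =>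
    intervalIntegrable_of_continuousOn_Ico_of_norm_le ht.2.le
      (hhcont.mono (Ico_subset_Ico_left ht.1)) fun τ hτ => hhB τ (Ico_subset_Ico_left ht.1 hτ)
  have hid := norm_rpow_eq_mul_sub_add_integral hα hycont hyne hylim hode hint
  have hbound := abs_neg_mul_intervalIntegral_le_of_rpow_eq hα hδ.le hM.le (by positivity)
    (fun τ hτ => ⟨norm_nonneg _, hB τ hτ⟩) hhy hid
  refine ⟨_, by positivity, fun t ht => ⟨hid t ht, hbound t ht, ?_⟩⟩
  rw [hid t ht, add_sub_cancel_left]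
  exact hbound t ht

theorem norm_power_identity_special_case (n : ℕ) (hn : 1 ≤ n)
    (α δ M a t₀ T' : ℝ) (hα : 0 < α) (hδ : 0 < δ) (hM : 0 < M) (ha : 0 < a)
    (ht₀ : 0 ≤ t₀) (hT' : t₀ < T')
    (y f : ℝ → EuclideanSpace ℝ (Fin n))
    (hycont : ContinuousOn y (Ico t₀ T'))
    (hyne : ∀ t ∈ Ico t₀ T', y t ≠ 0)
    (hylim : Tendsto y (𝓝[<] T') (𝓝 0))
    (hode : ∀ t ∈ Ioo t₀ T', HasDerivAt y ((-(a * ‖y t‖ ^ (-α))) • y t + f t) t)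
    (hfcont : ContinuousOn f (Ico t₀ T'))
    (hfb : ∀ t ∈ Ico t₀ T', ‖f t‖ ≤ M * ‖y t‖ ^ (1 - α + δ))
    :
    ∃ C : ℝ, 0 < C ∧
      ∀ t ∈ Ico t₀ T',
        ‖y t‖ ^ α = α * a * (T' - t) +
            (-α * ∫ τ in t..T', ‖y τ‖ ^ (α - 2) * (inner ℝ (f τ) (y τ) : ℝ)) ∧
        |(-α * ∫ τ in t..T', ‖y τ‖ ^ (α - 2) * (inner ℝ (f τ) (y τ) : ℝ))| ≤
            C * (T' - t) ^ (1 + δ / α) ∧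
        |‖y t‖ ^ α - α * a * (T' - t)| ≤ C * (T' - t) ^ (1 + δ / α) :=
  norm_power_identity_special_case_general n α δ M a t₀ T' hα hδ hM ha hT' y f hycont hyne hylim
    hode hfcont hfb
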